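/- arXiv:0805.3789 — 6 statements merged into one kernel-verified Lean document; each statement's English description precedes it below -/
import Mathlib

section
/- (Saint-Venant iteration lemma.) Let τ₁ < τ₂ be real numbers, μ : [τ₁,τ₂] → (0,∞) continuous, J : [τ₁,τ₂] → [0,∞) continuously differentiable, and f : [τ₁,τ₂] → [0,∞) nonincreasing. Assume that f(τ) + J(τ) ≤ −(2/μ(τ))·J′(τ) for every τ ∈ [τ₁,τ₂]. Then f(τ₂)·[exp(∫_{τ₁}^{τ₂} μ(s)/2 ds) − 1] + J(τ₂)·exp(∫_{τ₁}^{τ₂} μ(s)/2 ds) ≤ J(τ₁). -/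
/-!
With `M(τ) = ∫_{τ₁}^{τ} μ/2` as integrating factor, the hypothesis together with `f(τ₂) ≤ f(τ)` gives
`(e^M (J + f(τ₂)))' = e^M (J' + (μ/2)(J + f(τ₂))) ≤ 0`, so `e^M (J + f(τ₂))` is nonincreasing on
`[τ₁, τ₂]`; comparing its values at the two endpoints is the claim.
-/

open Filter Set Real Topology

namespace ContinuousOn

variable {a b x : ℝ} {g : ℝ → ℝ}

theorem continuousOn_primitive_Icc (hg : ContinuousOn g (Icc a b)) (hab : a ≤ b) :
    ContinuousOn (fun t => ∫ s in a..t, g s) (Icc a b) := by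
  rw [← uIcc_of_le hab] at hg ⊢
  exact intervalIntegral.continuousOn_primitive_interval (hg.integrableOn_compact isCompact_uIcc)

theorem hasDerivAt_primitive_of_mem_Ioo (hg : ContinuousOn g (Icc a b)) (hx : x ∈ Ioo a b) :
    HasDerivAt (fun t => ∫ s in a..t, g s) (g x) x := by
  have hnhds : Icc a b ∈ 𝓝 x := Icc_mem_nhds hx.1 hx.2
  refine intervalIntegral.integral_hasDerivAt_right ?_
    (hg.stronglyMeasurableAtFilter_nhdsWithin measurableSet_Icc x |>.filter_mono ?_)
    (hg.continuousAt hnhds)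
  · exact (hg.mono (Icc_subset_Icc_right hx.2.le)).intervalIntegrable_of_Icc hx.1.le
  · exact le_inf le_rfl (le_principal_iff.2 hnhds)

end ContinuousOn

theorem antitoneOn_exp_mul_of_hasDerivAt {a b : ℝ} {F F' M m : ℝ → ℝ}
    (hF : ContinuousOn F (Icc a b)) (hM : ContinuousOn M (Icc a b))
    (hF' : ∀ x ∈ Ioo a b, HasDerivAt F (F' x) x) (hM' : ∀ x ∈ Ioo a b, HasDerivAt M (m x) x)
    (h : ∀ x ∈ Ioo a b, F' x ≤ -(m x * F x)) :
    AntitoneOn (fun x => exp (M x) * F x) (Icc a b) := by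
  refine antitoneOn_of_hasDerivWithinAt_nonpos (convex_Icc a b) (hM.rexp.mul hF)
    (f' := fun x => exp (M x) * (m x * F x + F' x)) (fun x hx => ?_) (fun x hx => ?_)
  all_goals rw [interior_Icc] at hx
  · exact (((hM' x hx).exp.mul (hF' x hx)).congr_deriv (by ring)).hasDerivWithinAt
  · exact mul_nonpos_of_nonneg_of_nonpos (exp_pos _).le (by linarith [h x hx])

theorem saint_venant_iteration_general
    (τ₁ τ₂ : ℝ) (hlt : τ₁ < τ₂)
    (μ J J' f : ℝ → ℝ)
    (hμcont : ContinuousOn μ (Set.Icc τ₁ τ₂))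
    (hμpos : ∀ τ ∈ Set.Icc τ₁ τ₂, 0 < μ τ)
    (hJderiv : ∀ τ ∈ Set.Icc τ₁ τ₂, HasDerivWithinAt J (J' τ) (Set.Icc τ₁ τ₂) τ)
    (hfmono : ∀ a ∈ Set.Icc τ₁ τ₂, ∀ b ∈ Set.Icc τ₁ τ₂, a ≤ b → f b ≤ f a)
    (hineq : ∀ τ ∈ Set.Icc τ₁ τ₂, f τ + J τ ≤ -(2 / μ τ) * J' τ) :
    f τ₂ * (Real.exp (∫ s in τ₁..τ₂, μ s / 2) - 1) +
      J τ₂ * Real.exp (∫ s in τ₁..τ₂, μ s / 2) ≤ J τ₁ := by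
  have hle := hlt.le
  have hhalf : ContinuousOn (fun s => μ s / 2) (Icc τ₁ τ₂) := hμcont.div_const 2
  have hdecay : ∀ x ∈ Ioo τ₁ τ₂, J' x ≤ -(μ x / 2 * (J x + f τ₂)) := fun x hx => by
    have hxI := Ioo_subset_Icc_self hx
    have hμx := hμpos x hxI
    have hf := hfmono x hxI τ₂ (right_mem_Icc.2 hle) hxI.2
    have h := mul_le_mul_of_nonneg_left (hineq x hxI) (half_pos hμx).le
    rw [show μ x / 2 * (-(2 / μ x) * J' x) = -J' x by field_simp] at h
    nlinarith
  have hanti := antitoneOn_exp_mul_of_hasDerivAt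
    (fun x hx => ((hJderiv x hx).continuousWithinAt.add continuousWithinAt_const))
    (hhalf.continuousOn_primitive_Icc hle)
    (fun x hx => ((hJderiv x (Ioo_subset_Icc_self hx)).hasDerivAt
      (Icc_mem_nhds hx.1 hx.2)).add_const (f τ₂))
    (fun x hx => hhalf.hasDerivAt_primitive_of_mem_Ioo hx) hdecay
  have hends := hanti (left_mem_Icc.2 hle) (right_mem_Icc.2 hle) hle
  simp only [Pi.add_apply, intervalIntegral.integral_same, exp_zero, one_mul] at hends
  linear_combination hends

/-- Saint-Venant iteration lemma: if `f + J ≤ −(2/μ) J'` on `[τ₁,τ₂]` with `μ > 0` continuous,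
`J ≥ 0` continuously differentiable, and `f ≥ 0` nonincreasing, then
`f(τ₂)(e^{∫ μ/2} − 1) + J(τ₂) e^{∫ μ/2} ≤ J(τ₁)`. -/
theorem saint_venant_iteration
    (τ₁ τ₂ : ℝ) (hlt : τ₁ < τ₂)
    (μ J J' f : ℝ → ℝ)
    (hμcont : ContinuousOn μ (Set.Icc τ₁ τ₂))
    (hμpos : ∀ τ ∈ Set.Icc τ₁ τ₂, 0 < μ τ)
    (hJderiv : ∀ τ ∈ Set.Icc τ₁ τ₂, HasDerivWithinAt J (J' τ) (Set.Icc τ₁ τ₂) τ)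
    (hJ'cont : ContinuousOn J' (Set.Icc τ₁ τ₂))
    (hJnn : ∀ τ ∈ Set.Icc τ₁ τ₂, 0 ≤ J τ)
    (hfnn : ∀ τ ∈ Set.Icc τ₁ τ₂, 0 ≤ f τ)
    (hfmono : ∀ a ∈ Set.Icc τ₁ τ₂, ∀ b ∈ Set.Icc τ₁ τ₂, a ≤ b → f b ≤ f a)
    (hineq : ∀ τ ∈ Set.Icc τ₁ τ₂, f τ + J τ ≤ -(2 / μ τ) * J' τ) :
    f τ₂ * (Real.exp (∫ s in τ₁..τ₂, μ s / 2) - 1) +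
      J τ₂ * Real.exp (∫ s in τ₁..τ₂, μ s / 2) ≤ J τ₁ :=
  saint_venant_iteration_general τ₁ τ₂ hlt μ J J' f hμcont hμpos hJderiv hfmono hineq
end

section
/- (Decay from a nonlinear differential inequality.) Let r₀ > 0, θ ∈ (0,1), K > 0, let h : (0,r₀] → (0,∞) be continuous and integrable near 0, and set H(r) = ∫_0^r h(s)ds. Let I : (0,r₀] → (0,∞) be continuously differentiable and nonincreasing, and assume I(r) ≤ K·h(r)^{−θ}·(−I′(r))^{θ} for every r ∈ (0,r₀]. Then I(r) ≤ (θ/(1−θ))^{θ/(1−θ)} · K^{1/(1−θ)} · H(r)^{−θ/(1−θ)} for every r ∈ (0,r₀]. In particular, with θ = 2/(q+1) (q > 1) and K = 2c₁·τ^{N(q−1)/(q+1)}, one gets I(r) ≤ (2/(q−1))^{2/(q−1)}·(2c₁)^{(q+1)/(q−1)}·τ^N·H(r)^{−2/(q−1)}. -/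
/-!
With `p = θ / (1 - θ)`, the differential inequality says that `G = I ^ (-1/p)` grows at
least like `H / (p K^{1/θ})`: indeed `G' = p⁻¹ (-I') I^{-1/θ} ≥ h / (p K^{1/θ})`. Integrating from
`0` (where `G ≥ 0`) gives `H(r) / (p K^{1/θ}) ≤ G(r)`, and raising to the power `-p` gives the bound.
-/

open MeasureTheory Filter Set
open scoped Topology

theorem HasDerivAt.nonpos_of_antitoneOn_Ioc {f : ℝ → ℝ} {f' a b x : ℝ} (hx : x ∈ Ioc a b)
    (hf : HasDerivAt f f' x) (hfa : AntitoneOn f (Ioc a b)) : f' ≤ 0 :=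
  hf.hasDerivWithinAt.nonpos_of_antitoneOn
    (uniqueDiffWithinAt_iff_accPt.1 (uniqueDiffOn_convex (convex_Ioc a b)
      (by simpa using hx.1.trans_le hx.2) x hx)) hfa

theorem integral_le_of_le_deriv_of_nonneg {G G' φ : ℝ → ℝ} {r : ℝ} (hr : 0 < r)
    (hG : ∀ x ∈ Ioc 0 r, HasDerivAt G (G' x) x) (hG₀ : ∀ x ∈ Ioc 0 r, 0 ≤ G x)
    (hφ : IntegrableOn φ (Ioc 0 r)) (hφG : ∀ x ∈ Ioc 0 r, φ x ≤ G' x) :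
    ∫ x in 0..r, φ x ≤ G r := by
  have hφ' : IntegrableOn φ (uIcc 0 r) := by
    rwa [uIcc_of_le hr.le, integrableOn_Icc_iff_integrableOn_Ioc]
  have hlim : Tendsto (fun a => ∫ x in a..r, φ x) (𝓝[>] 0) (𝓝 (∫ x in 0..r, φ x)) := by
    have := intervalIntegral.continuousOn_primitive_interval_left hφ' 0 (by simp [hr.le])
    rw [uIcc_of_le hr.le, ← nhdsWithin_Ioc_eq_nhdsGT hr] at *
    exact this.mono_left (nhdsWithin_mono _ Ioc_subset_Icc_self)
  refine le_of_tendsto hlim ?_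
  filter_upwards [Ioo_mem_nhdsGT hr] with a ha
  have hsub : Icc a r ⊆ Ioc 0 r := Icc_subset_Ioc_iff ha.2.le |>.2 ⟨ha.1, le_rfl⟩
  have hFTC := intervalIntegral.integral_le_sub_of_hasDeriv_right_of_le ha.2.le
    (fun x hx => (hG x (hsub hx)).continuousAt.continuousWithinAt)
    (fun x hx => (hG x (hsub (Ioo_subset_Icc_self hx))).hasDerivWithinAt)
    (hφ.mono_set hsub) (fun x hx => hφG x (hsub (Ioo_subset_Icc_self hx)))
  linarith [hG₀ a (hsub (left_mem_Icc.2 ha.2.le))]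

theorem le_mul_rpow_neg_inv_of_le_mul_rpow {x y z K θ : ℝ} (hx : 0 < x) (hy : 0 < y)
    (hz : 0 ≤ z) (hK : 0 ≤ K) (hθ : 0 < θ) (hxyz : x ≤ K * y ^ (-θ) * z ^ θ) :
    y ≤ K ^ θ⁻¹ * z * x ^ (-θ⁻¹) := by
  have hroot : x ^ θ⁻¹ ≤ K ^ θ⁻¹ * y⁻¹ * z := by
    rw [← Real.rpow_le_rpow_iff (by positivity) (by positivity) hθ,
      Real.rpow_inv_rpow hx.le hθ.ne', Real.mul_rpow (by positivity) hz,
      Real.mul_rpow (by positivity) (by positivity), Real.rpow_inv_rpow hK hθ.ne',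
      Real.inv_rpow hy.le, ← Real.rpow_neg hy.le]
    exact hxyz
  have hxθ : 0 < x ^ θ⁻¹ := by positivity
  calc y = y * x ^ θ⁻¹ * x ^ (-θ⁻¹) := by
        rw [Real.rpow_neg hx.le, mul_assoc, mul_inv_cancel₀ hxθ.ne', mul_one]
    _ ≤ y * (K ^ θ⁻¹ * y⁻¹ * z) * x ^ (-θ⁻¹) := by gcongr
    _ = K ^ θ⁻¹ * z * x ^ (-θ⁻¹) := by field_simp

theorem inv_mul_rpow_neg_div_one_sub {θ K H : ℝ} (hθ : θ ∈ Ioo 0 1) (hK : 0 < K) (hH : 0 < H) :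
    ((θ / (1 - θ) * K ^ θ⁻¹)⁻¹ * H) ^ (-(θ / (1 - θ))) =
      (θ / (1 - θ)) ^ (θ / (1 - θ)) * K ^ (1 / (1 - θ)) * H ^ (-(θ / (1 - θ))) := by
  obtain ⟨hθ₀, hθ₁⟩ := hθ
  have hp : 0 < θ / (1 - θ) := div_pos hθ₀ (by linarith)
  rw [Real.mul_rpow (by positivity) hH.le, Real.inv_rpow (by positivity),
    Real.rpow_neg (by positivity), inv_inv, Real.mul_rpow hp.le (by positivity),
    ← Real.rpow_mul hK.le, show θ⁻¹ * (θ / (1 - θ)) = 1 / (1 - θ) by field_simp]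

theorem le_of_differential_inequality {I I' h : ℝ → ℝ} {θ K r : ℝ} (hθ : θ ∈ Ioo 0 1)
    (hK : 0 < K) (hr : 0 < r) (hh : ∀ x ∈ Ioc 0 r, 0 < h x) (hint : IntegrableOn h (Ioc 0 r))
    (hI : ∀ x ∈ Ioc 0 r, HasDerivAt I (I' x) x) (hIpos : ∀ x ∈ Ioc 0 r, 0 < I x)
    (hIanti : AntitoneOn I (Ioc 0 r))
    (hineq : ∀ x ∈ Ioc 0 r, I x ≤ K * h x ^ (-θ) * (-I' x) ^ θ) :
    I r ≤ (θ / (1 - θ)) ^ (θ / (1 - θ)) * K ^ (1 / (1 - θ)) *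
      (∫ s in 0..r, h s) ^ (-(θ / (1 - θ))) := by
  obtain ⟨hθ₀, hθ₁⟩ := hθ
  set p := θ / (1 - θ) with hp_def
  have hp : 0 < p := div_pos hθ₀ (by linarith)
  set c := (p * K ^ θ⁻¹)⁻¹ with hc
  have hG : ∀ x ∈ Ioc 0 r, HasDerivAt (fun y => I y ^ (-p⁻¹))
      (p⁻¹ * (-I' x) * I x ^ (-θ⁻¹)) x := fun x hx => by
    convert (hI x hx).rpow_const (p := -p⁻¹) (Or.inl (hIpos x hx).ne') using 1
    rw [show -p⁻¹ - 1 = -θ⁻¹ by rw [hp_def]; field_simp; ring]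
    ring
  have hderiv : ∀ x ∈ Ioc 0 r, c * h x ≤ p⁻¹ * (-I' x) * I x ^ (-θ⁻¹) := fun x hx => by
    have hI'x : 0 ≤ -I' x := neg_nonneg.2 ((hI x hx).nonpos_of_antitoneOn_Ioc hx hIanti)
    have hhx := le_mul_rpow_neg_inv_of_le_mul_rpow (hIpos x hx) (hh x hx) hI'x hK.le hθ₀
      (hineq x hx)
    calc c * h x ≤ c * (K ^ θ⁻¹ * (-I' x) * I x ^ (-θ⁻¹)) := by gcongr
      _ = p⁻¹ * (-I' x) * I x ^ (-θ⁻¹) := by rw [hc]; field_simp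
  have hH : 0 < ∫ s in 0..r, h s :=
    intervalIntegral.intervalIntegral_pos_of_pos_on
      ((intervalIntegrable_iff_integrableOn_Ioc_of_le hr.le).2 hint)
      (fun x hx => hh x (Ioo_subset_Ioc_self hx)) hr
  have hGr : c * ∫ s in 0..r, h s ≤ I r ^ (-p⁻¹) := by
    rw [← intervalIntegral.integral_const_mul]
    exact integral_le_of_le_deriv_of_nonneg hr hG
      (fun x hx => (Real.rpow_pos_of_pos (hIpos x hx) _).le) (hint.const_mul c) hderiv
  rw [← inv_neg, Real.le_rpow_inv_iff_of_neg (by positivity) (hIpos r (right_mem_Ioc.2 hr))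
    (by linarith)] at hGr
  rwa [← inv_mul_rpow_neg_div_one_sub ⟨hθ₀, hθ₁⟩ hK hH]

theorem div_one_sub_of_eq_two_div {θ q : ℝ} (hq : 1 < q) (hθ : θ = 2 / (q + 1)) :
    θ / (1 - θ) = 2 / (q - 1) ∧ 1 / (1 - θ) = (q + 1) / (q - 1) := by
  have h1 : q - 1 ≠ 0 := by linarith
  have h2 : q + 1 ≠ 0 := by linarith
  have h1θ : 1 - θ = (q - 1) / (q + 1) := by rw [hθ]; field_simp; ring
  rw [h1θ, hθ]
  constructor <;> field_simp

theorem mul_rpow_mul_div_rpow_div {a τ x s t : ℝ} (ha : 0 ≤ a) (hτ : 0 ≤ τ) (hs : s ≠ 0)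
    (ht : t ≠ 0) : (a * τ ^ (x * s / t)) ^ (t / s) = a ^ (t / s) * τ ^ x := by
  rw [Real.mul_rpow ha (by positivity), ← Real.rpow_mul hτ]
  congr 2
  field_simp

theorem decay_from_differential_inequality_general
    (r₀ θ K : ℝ) (hθ : θ ∈ Set.Ioo (0:ℝ) 1) (hK : 0 < K)
    (h : ℝ → ℝ)
    (hpos : ∀ r ∈ Set.Ioc (0:ℝ) r₀, 0 < h r)
    (hint : IntegrableOn h (Set.Ioc 0 r₀))
    (I I' : ℝ → ℝ)
    (hIderiv : ∀ r ∈ Set.Ioc (0:ℝ) r₀, HasDerivAt I (I' r) r)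
    (hIpos : ∀ r ∈ Set.Ioc (0:ℝ) r₀, 0 < I r)
    (hImono : ∀ a ∈ Set.Ioc (0:ℝ) r₀, ∀ b ∈ Set.Ioc (0:ℝ) r₀, a ≤ b → I b ≤ I a)
    (hineq : ∀ r ∈ Set.Ioc (0:ℝ) r₀, I r ≤ K * h r ^ (-θ) * (-I' r) ^ θ) :
    (∀ r ∈ Set.Ioc (0:ℝ) r₀,
        I r ≤ (θ/(1 - θ)) ^ (θ/(1 - θ)) * K ^ (1/(1 - θ)) *
          (∫ s in (0:ℝ)..r, h s) ^ (-(θ/(1 - θ))))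
    ∧ ∀ (N : ℕ) (q c₁ τ : ℝ), 1 < q → 0 < c₁ → 0 < τ →
        θ = 2/(q + 1) → K = 2 * c₁ * τ ^ ((N : ℝ) * (q - 1)/(q + 1)) →
        ∀ r ∈ Set.Ioc (0:ℝ) r₀,
          I r ≤ (2/(q - 1)) ^ (2/(q - 1)) * (2 * c₁) ^ ((q + 1)/(q - 1)) * τ ^ (N : ℝ) *
            (∫ s in (0:ℝ)..r, h s) ^ (-(2/(q - 1))) := by
  have hbound : ∀ r ∈ Ioc (0:ℝ) r₀, I r ≤ (θ/(1 - θ)) ^ (θ/(1 - θ)) * K ^ (1/(1 - θ)) *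
      (∫ s in (0:ℝ)..r, h s) ^ (-(θ/(1 - θ))) := fun r hr => by
    have hsub : Ioc 0 r ⊆ Ioc 0 r₀ := Ioc_subset_Ioc_right hr.2
    exact le_of_differential_inequality hθ hK hr.1 (fun x hx => hpos x (hsub hx))
      (hint.mono_set hsub) (fun x hx => hIderiv x (hsub hx)) (fun x hx => hIpos x (hsub hx))
      (fun a ha b hb hab => hImono a (hsub ha) b (hsub hb) hab) (fun x hx => hineq x (hsub hx))
  refine ⟨hbound, fun N q c₁ τ hq hc₁ hτ hθq hKq r hr => ?_⟩
  obtain ⟨hp, hexp⟩ := div_one_sub_of_eq_two_div hq hθq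
  have hr_bound := hbound r hr
  rwa [hp, hexp, hKq,
    mul_rpow_mul_div_rpow_div (by positivity) hτ.le (by linarith) (by linarith),
    ← mul_assoc] at hr_bound

/-- Decay from a nonlinear differential inequality: if a positive nonincreasing `C¹` function
`I` satisfies `I(r) ≤ K h(r)^{−θ} (−I'(r))^{θ}` with `θ ∈ (0,1)`, then
`I(r) ≤ (θ/(1−θ))^{θ/(1−θ)} K^{1/(1−θ)} H(r)^{−θ/(1−θ)}` where `H(r) = ∫₀ʳ h`.
In particular with `θ = 2/(q+1)` and `K = 2c₁ τ^{N(q−1)/(q+1)}` one gets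
`I(r) ≤ (2/(q−1))^{2/(q−1)} (2c₁)^{(q+1)/(q−1)} τ^N H(r)^{−2/(q−1)}`. -/
theorem decay_from_differential_inequality
    (r₀ θ K : ℝ) (hr₀ : 0 < r₀) (hθ : θ ∈ Set.Ioo (0:ℝ) 1) (hK : 0 < K)
    (h : ℝ → ℝ) (hcont : ContinuousOn h (Set.Ioc 0 r₀))
    (hpos : ∀ r ∈ Set.Ioc (0:ℝ) r₀, 0 < h r)
    (hint : IntegrableOn h (Set.Ioc 0 r₀))
    (I I' : ℝ → ℝ)
    (hIderiv : ∀ r ∈ Set.Ioc (0:ℝ) r₀, HasDerivAt I (I' r) r)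
    (hI'cont : ContinuousOn I' (Set.Ioc 0 r₀))
    (hIpos : ∀ r ∈ Set.Ioc (0:ℝ) r₀, 0 < I r)
    (hImono : ∀ a ∈ Set.Ioc (0:ℝ) r₀, ∀ b ∈ Set.Ioc (0:ℝ) r₀, a ≤ b → I b ≤ I a)
    (hineq : ∀ r ∈ Set.Ioc (0:ℝ) r₀, I r ≤ K * h r ^ (-θ) * (-I' r) ^ θ) :
    (∀ r ∈ Set.Ioc (0:ℝ) r₀,
        I r ≤ (θ/(1 - θ)) ^ (θ/(1 - θ)) * K ^ (1/(1 - θ)) *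
          (∫ s in (0:ℝ)..r, h s) ^ (-(θ/(1 - θ))))
    ∧ ∀ (N : ℕ) (q c₁ τ : ℝ), 1 < q → 0 < c₁ → 0 < τ →
        θ = 2/(q + 1) → K = 2 * c₁ * τ ^ ((N : ℝ) * (q - 1)/(q + 1)) →
        ∀ r ∈ Set.Ioc (0:ℝ) r₀,
          I r ≤ (2/(q - 1)) ^ (2/(q - 1)) * (2 * c₁) ^ ((q + 1)/(q - 1)) * τ ^ (N : ℝ) *
            (∫ s in (0:ℝ)..r, h s) ^ (-(2/(q - 1))) :=
  decay_from_differential_inequality_general r₀ θ K hθ hK h hpos hint I I' hIderiv hIpos hImono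
    hineq
end

section
/- Let ω : (0,∞) → (0,∞) be continuous and nondecreasing. Then for every r > 0, ∫_0^r exp(−ω(t)/t) dt ≥ (r² / (ω(r) + 2r)) · exp(−ω(r)/r). -/
/-!
Fix `r` and put `a = ω r`. On `(0, r]` monotonicity gives `e^{-ω(t)/t} ≥ e^{-a/t}`, and
`F(t) = t²/(a+2t) · e^{-a/t}` is a subprimitive of `e^{-a/t}`:
`F'(t) = (a² + 4at + 2t²)/(a + 2t)² · e^{-a/t} ≤ e^{-a/t}`.
Since `F` extends continuously by `F(0) = 0`, integrating `F' ≤ e^{-ω(t)/t}` over `[0, r]` gives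
`F(r) ≤ ∫₀ʳ e^{-ω(t)/t} dt`.
-/

open MeasureTheory Set Real

noncomputable def lowerPrimitive (a t : ℝ) : ℝ := t ^ 2 / (a + 2 * t) * exp (-(a / t))

theorem hasDerivAt_lowerPrimitive {a t : ℝ} (ht : t ≠ 0) (hat : a + 2 * t ≠ 0) :
    HasDerivAt (lowerPrimitive a)
      ((a ^ 2 + 4 * a * t + 2 * t ^ 2) / (a + 2 * t) ^ 2 * exp (-(a / t))) t := by
  have hquot : HasDerivAt (fun t => t ^ 2 / (a + 2 * t))
      ((2 * t * (a + 2 * t) - t ^ 2 * 2) / (a + 2 * t) ^ 2) t := by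
    have hden : HasDerivAt (fun t => a + 2 * t) 2 t := by
      simpa using ((hasDerivAt_id t).const_mul 2).const_add a
    simpa using (hasDerivAt_pow 2 t).fun_div hden hat
  have hexp : HasDerivAt (fun t => exp (-(a / t))) (exp (-(a / t)) * (a / t ^ 2)) t := by
    simpa [div_eq_mul_inv] using (((hasDerivAt_inv ht).const_mul a).neg).exp
  refine (hquot.fun_mul hexp).congr_deriv ?_
  field_simp
  ring

theorem continuousOn_lowerPrimitive {a : ℝ} (ha : 0 < a) :
    ContinuousOn (lowerPrimitive a) (Ici 0) := by
  -- `e^{-a/t} = expNegInvGlue (t / a)` for `t > 0`, and at `t = 0` both sides vanish.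
  have hglue : EqOn (fun t => t ^ 2 / (a + 2 * t) * expNegInvGlue (t / a)) (lowerPrimitive a)
      (Ici 0) := by
    intro t (ht : 0 ≤ t)
    rcases ht.eq_or_lt with rfl | ht
    · simp [lowerPrimitive, expNegInvGlue.zero]
    · simp [lowerPrimitive, expNegInvGlue, not_le.2 (div_pos ht ha), inv_div]
  refine ContinuousOn.congr ?_ hglue.symm
  refine ContinuousOn.mul ?_ ((expNegInvGlue.contDiff (n := 0)).continuous.comp_continuousOn
    (by fun_prop))
  exact ContinuousOn.div (by fun_prop) (by fun_prop) fun t (ht : 0 ≤ t) => by positivity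

theorem lowerPrimitive_le_integral {a r : ℝ} {φ : ℝ → ℝ} (ha : 0 < a) (hr : 0 ≤ r)
    (hφ : IntegrableOn φ (Icc 0 r)) (hle : ∀ t ∈ Ioo 0 r, exp (-(a / t)) ≤ φ t) :
    lowerPrimitive a r ≤ ∫ t in 0..r, φ t := by
  have hderiv_le : ∀ t ∈ Ioo 0 r,
      (a ^ 2 + 4 * a * t + 2 * t ^ 2) / (a + 2 * t) ^ 2 * exp (-(a / t)) ≤ φ t := by
    intro t ht
    have ht0 : 0 < t := ht.1
    refine le_trans ?_ (hle t ht)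
    refine mul_le_of_le_one_left (exp_pos _).le ((div_le_one (by positivity)).2 ?_)
    nlinarith
  have := intervalIntegral.sub_le_integral_of_hasDeriv_right_of_le hr
    ((continuousOn_lowerPrimitive ha).mono Icc_subset_Ici_self)
    (fun t ht => (hasDerivAt_lowerPrimitive ht.1.ne' (by linarith [ht.1])).hasDerivWithinAt)
    hφ hderiv_le
  simpa [lowerPrimitive] using this

theorem integrableOn_exp_neg_div_self {ω : ℝ → ℝ} {r : ℝ} (hmono : MonotoneOn ω (Ioc 0 r))
    (hnonneg : ∀ t ∈ Ioc 0 r, 0 ≤ ω t) :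
    IntegrableOn (fun t => exp (-(ω t / t))) (Icc 0 r) := by
  rw [integrableOn_Icc_iff_integrableOn_Ioc]
  have hmeas : AEMeasurable (fun t => exp (-(ω t / t))) (volume.restrict (Ioc 0 r)) :=
    ((aemeasurable_restrict_of_monotoneOn measurableSet_Ioc hmono).div aemeasurable_id).neg.exp
  refine Integrable.mono' (integrable_const 1) hmeas.aestronglyMeasurable ?_
  filter_upwards [ae_restrict_mem measurableSet_Ioc] with t ht
  rw [norm_of_nonneg (exp_pos _).le, exp_le_one_iff, neg_nonpos]
  exact div_nonneg (hnonneg t ht) ht.1.le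

theorem primitive_lower_bound_exp_general
    (ω : ℝ → ℝ)
    (hpos : ∀ t : ℝ, 0 < t → 0 < ω t)
    (hmono : ∀ s t : ℝ, 0 < s → s ≤ t → ω s ≤ ω t) :
    ∀ r : ℝ, 0 < r →
      (r ^ 2 / (ω r + 2 * r)) * Real.exp (-(ω r / r)) ≤
        ∫ t in (0:ℝ)..r, Real.exp (-(ω t / t)) := by
  intro r hr
  have hmonoOn : MonotoneOn ω (Ioc 0 r) := fun s hs t _ hst => hmono s t hs.1 hst
  refine lowerPrimitive_le_integral (hpos r hr) hr.le
    (integrableOn_exp_neg_div_self hmonoOn fun t ht => (hpos t ht.1).le) fun t ht => ?_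
  obtain ⟨ht0, htr⟩ := ht
  gcongr
  exact hmono t r ht0 htr.le

/-- Lower bound for the primitive of a degenerate absorption potential: if `ω` is positive,
continuous and nondecreasing on `(0,∞)`, then
`∫₀ʳ e^{−ω(t)/t} dt ≥ (r²/(ω(r)+2r)) e^{−ω(r)/r}` for all `r > 0`. -/
theorem primitive_lower_bound_exp
    (ω : ℝ → ℝ) (hcont : ContinuousOn ω (Set.Ioi 0))
    (hpos : ∀ t : ℝ, 0 < t → 0 < ω t)
    (hmono : ∀ s t : ℝ, 0 < s → s ≤ t → ω s ≤ ω t) :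
    ∀ r : ℝ, 0 < r →
      (r ^ 2 / (ω r + 2 * r)) * Real.exp (-(ω r / r)) ≤
        ∫ t in (0:ℝ)..r, Real.exp (-(ω t / t)) :=
  primitive_lower_bound_exp_general ω hpos hmono
end

section
/- Let ω : (0,∞) → (0,∞) be continuous and nondecreasing. Then for every r > 0, ∫_0^r exp(−exp(ω(t)/t)) dt ≥ (r² / (2ω(r) + 2r)) · exp(−ω(r)/r) · exp(−exp(ω(r)/r)). -/
/-!
Freezing `ω` at `b = ω r` can only decrease the integrand on `(0, r]`, since `ω t / t ≤ b / t`
there and `x ↦ exp (-exp x)` is antitone. For constant `b`, the function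
`G t = t² / (2b + 2t) · exp (-b/t) · exp (-exp (b/t))` tends to `0` at `0⁺` and its derivative is
`(p t · exp (-b/t) + q t) · exp (-exp (b/t))` with `p, q ≥ 0` and `p + q ≤ 1`, so
`G' ≤ exp (-exp (b/t))` and `G r ≤ ∫₀ʳ exp (-exp (b/t)) dt`.
-/

open MeasureTheory Filter Set Real Topology

theorem integrableOn_exp_neg_exp {α : Type*} [MeasurableSpace α] {μ : Measure α} {s : Set α}
    {f : α → ℝ} (hs : μ s < ⊤) (hf : AEMeasurable f (μ.restrict s)) :
    IntegrableOn (fun x => exp (-exp (f x))) s μ := by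
  refine .of_bound hs (by fun_prop : AEMeasurable _ _).aestronglyMeasurable 1
    (.of_forall fun x => ?_)
  rw [norm_of_nonneg (exp_nonneg _), exp_le_one_iff, neg_nonpos]
  exact (exp_pos _).le

theorem intervalIntegrable_exp_neg_exp {f : ℝ → ℝ} {a b : ℝ} (hab : a ≤ b)
    (hf : AEMeasurable f (volume.restrict (Ioc a b))) :
    IntervalIntegrable (fun x => exp (-exp (f x))) volume a b :=
  (intervalIntegrable_iff_integrableOn_Ioc_of_le hab).2
    (integrableOn_exp_neg_exp measure_Ioc_lt_top hf)

theorem antitone_exp_neg_exp : Antitone fun x : ℝ => exp (-exp x) :=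
  fun _ _ h => exp_le_exp.2 (neg_le_neg (exp_le_exp.2 h))

noncomputable def primitiveMinorant (b t : ℝ) : ℝ :=
  t ^ 2 / (2 * b + 2 * t) * exp (-(b / t)) * exp (-exp (b / t))

section
variable {b : ℝ}

@[simp] theorem primitiveMinorant_zero_right : primitiveMinorant b 0 = 0 := by
  simp [primitiveMinorant]

theorem hasDerivAt_primitiveMinorant (hb : 0 < b) {t : ℝ} (ht : 0 < t) :
    HasDerivAt (primitiveMinorant b)
      (((t * (2 * b + t) + b * (b + t)) / (2 * (b + t) ^ 2) * exp (-(b / t)) + b / (2 * (b + t)))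
        * exp (-exp (b / t))) t := by
  have hden : 2 * b + 2 * t ≠ 0 := by positivity
  have hq : HasDerivAt (fun t => b / t) (-(b / t ^ 2)) t := by
    simpa [div_eq_mul_inv] using (hasDerivAt_inv ht.ne').const_mul b
  have hu : HasDerivAt (fun t => t ^ 2 / (2 * b + 2 * t))
      ((2 * t * (2 * b + 2 * t) - t ^ 2 * 2) / (2 * b + 2 * t) ^ 2) t :=
    ((hasDerivAt_pow 2 t).congr_deriv (by ring)).div
      (((hasDerivAt_id t).const_mul 2).const_add (2 * b) |>.congr_deriv (by simp)) hden
  have hcancel : exp (-(b / t)) * exp (b / t) = 1 := by rw [← exp_add]; simp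
  refine ((hu.mul hq.neg.exp).mul hq.exp.neg.exp).congr_deriv ?_
  simp only [Pi.neg_apply, Pi.mul_apply]
  field_simp
  linear_combination (t * b + b ^ 2) * hcancel

theorem primitiveMinorant_deriv_le (hb : 0 < b) {t : ℝ} (ht : 0 < t) :
    ((t * (2 * b + t) + b * (b + t)) / (2 * (b + t) ^ 2) * exp (-(b / t)) + b / (2 * (b + t)))
        * exp (-exp (b / t)) ≤ exp (-exp (b / t)) := by
  have hp : 0 ≤ (t * (2 * b + t) + b * (b + t)) / (2 * (b + t) ^ 2) := by positivity
  have hsum : (t * (2 * b + t) + b * (b + t)) / (2 * (b + t) ^ 2) + b / (2 * (b + t)) ≤ 1 := by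
    rw [div_add_div _ _ (by positivity) (by positivity), div_le_one (by positivity)]
    nlinarith [mul_pos hb ht, mul_pos (mul_pos hb ht) ht, mul_pos (mul_pos hb ht) hb]
  have hA : exp (-(b / t)) ≤ 1 := exp_le_one_iff.2 (neg_nonpos.2 (by positivity))
  exact mul_le_of_le_one_left (exp_nonneg _) (by nlinarith)

theorem primitiveMinorant_mem_Icc (hb : 0 < b) {t : ℝ} (ht : 0 ≤ t) :
    primitiveMinorant b t ∈ Icc 0 (t ^ 2 / (2 * b + 2 * t)) := by
  have hu : 0 ≤ t ^ 2 / (2 * b + 2 * t) := div_nonneg (sq_nonneg t) (by linarith)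
  have hA : exp (-(b / t)) ≤ 1 := exp_le_one_iff.2 (neg_nonpos.2 (div_nonneg hb.le ht))
  have hB : exp (-exp (b / t)) ≤ 1 := exp_le_one_iff.2 (neg_nonpos.2 (exp_pos _).le)
  unfold primitiveMinorant
  refine ⟨by positivity, ?_⟩
  rw [mul_assoc]
  exact mul_le_of_le_one_right hu (mul_le_one₀ hA (exp_nonneg _) hB)

theorem continuousWithinAt_primitiveMinorant_zero (hb : 0 < b) :
    ContinuousWithinAt (primitiveMinorant b) (Ici 0) 0 := by
  have hu : Tendsto (fun t => t ^ 2 / (2 * b + 2 * t)) (𝓝[Ici 0] 0) (𝓝 0) := by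
    have : ContinuousAt (fun t => t ^ 2 / (2 * b + 2 * t)) 0 :=
      (continuousAt_id.pow 2).div (by fun_prop) (by simp [hb.ne'])
    simpa using this.tendsto.mono_left nhdsWithin_le_nhds
  rw [ContinuousWithinAt, primitiveMinorant_zero_right]
  refine tendsto_of_tendsto_of_tendsto_of_le_of_le' tendsto_const_nhds hu ?_ ?_ <;>
    filter_upwards [self_mem_nhdsWithin] with t ht
  exacts [(primitiveMinorant_mem_Icc hb ht).1, (primitiveMinorant_mem_Icc hb ht).2]

theorem continuousOn_primitiveMinorant (hb : 0 < b) :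
    ContinuousOn (primitiveMinorant b) (Ici 0) := by
  intro t ht
  rcases (mem_Ici.1 ht).eq_or_lt with rfl | ht
  · exact continuousWithinAt_primitiveMinorant_zero hb
  · exact (hasDerivAt_primitiveMinorant hb ht).continuousAt.continuousWithinAt

theorem primitiveMinorant_le_integral (hb : 0 < b) {r : ℝ} (hr : 0 ≤ r) :
    primitiveMinorant b r ≤ ∫ t in 0..r, exp (-exp (b / t)) := by
  simpa using intervalIntegral.sub_le_integral_of_hasDeriv_right_of_le hr
    ((continuousOn_primitiveMinorant hb).mono Icc_subset_Ici_self)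
    (fun t ht => (hasDerivAt_primitiveMinorant hb ht.1).hasDerivWithinAt)
    (integrableOn_exp_neg_exp measure_Icc_lt_top (by fun_prop))
    (fun t ht => primitiveMinorant_deriv_le hb ht.1)

end

theorem primitive_lower_bound_doubly_exp_general
    (ω : ℝ → ℝ)
    (hpos : ∀ t : ℝ, 0 < t → 0 < ω t)
    (hmono : ∀ s t : ℝ, 0 < s → s ≤ t → ω s ≤ ω t) :
    ∀ r : ℝ, 0 < r →
      (r ^ 2 / (2 * ω r + 2 * r)) * Real.exp (-(ω r / r)) *
          Real.exp (-Real.exp (ω r / r)) ≤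
        ∫ t in (0:ℝ)..r, Real.exp (-Real.exp (ω t / t)) := by
  intro r hr
  have hω : AEMeasurable (fun t => ω t / t) (volume.restrict (Ioc 0 r)) :=
    (aemeasurable_restrict_of_monotoneOn measurableSet_Ioc
      fun s hs t _ hst => hmono s t hs.1 hst).div aemeasurable_id
  calc _ = primitiveMinorant (ω r) r := rfl
    _ ≤ ∫ t in 0..r, exp (-exp (ω r / t)) := primitiveMinorant_le_integral (hpos r hr) hr.le
    _ ≤ ∫ t in 0..r, exp (-exp (ω t / t)) := by
      refine intervalIntegral.integral_mono_on_of_le_Ioo hr.le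
        (intervalIntegrable_exp_neg_exp hr.le (by fun_prop))
        (intervalIntegrable_exp_neg_exp hr.le hω) fun t ht => ?_
      exact antitone_exp_neg_exp (div_le_div_of_nonneg_right (hmono t r ht.1 ht.2.le) ht.1.le)

/-- Lower bound for the primitive of a doubly exponentially degenerate absorption potential:
if `ω` is positive, continuous and nondecreasing on `(0,∞)`, then
`∫₀ʳ e^{−e^{ω(t)/t}} dt ≥ (r²/(2ω(r)+2r)) e^{−ω(r)/r} e^{−e^{ω(r)/r}}` for all `r > 0`. -/
theorem primitive_lower_bound_doubly_exp
    (ω : ℝ → ℝ) (hcont : ContinuousOn ω (Set.Ioi 0))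
    (hpos : ∀ t : ℝ, 0 < t → 0 < ω t)
    (hmono : ∀ s t : ℝ, 0 < s → s ≤ t → ω s ≤ ω t) :
    ∀ r : ℝ, 0 < r →
      (r ^ 2 / (2 * ω r + 2 * r)) * Real.exp (-(ω r / r)) *
          Real.exp (-Real.exp (ω r / r)) ≤
        ∫ t in (0:ℝ)..r, Real.exp (-Real.exp (ω t / t)) :=
  primitive_lower_bound_doubly_exp_general ω hpos hmono
end

section
/- (Finite extinction for an ordinary differential inequality.) Let τ₀ ∈ ℝ, C > 0, b > 1, and let E : [τ₀,∞) → [0,∞) be continuously differentiable and nonincreasing, satisfying E(τ) ≤ C·(−E′(τ))^{b} for every τ ≥ τ₀ with E(τ) > 0. Then E(τ) = 0 for every τ ≥ τ₀ + (b/(b−1))·C^{1/b}·E(τ₀)^{(b−1)/b}. -/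
/-!
With `θ = (b - 1)/b`, the differential inequality says that `E ^ θ` decreases at rate at least
`K = θ / C ^ (1/b)` as long as `E > 0`: indeed `(E ^ θ)' = θ E ^ (-1/b) E'` and
`-E' ≥ (E / C) ^ (1/b)`. Hence `E ^ θ` would become negative after time
`E(τ₀) ^ θ / K = (b/(b-1)) C ^ (1/b) E(τ₀) ^ θ`.
-/

open Set

lemma HasDerivAt.nonpos_of_antitoneOn_Ici {g : ℝ → ℝ} {g' a x : ℝ} (hd : HasDerivAt g g' x)
    (hg : AntitoneOn g (Ici a)) (hx : a ≤ x) : g' ≤ 0 := by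
  have hacc : AccPt x (Filter.principal (Ici a)) := by
    refine AccPt.mono ?_ (Filter.principal_mono.2 (Ioi_subset_Ici hx))
    rw [accPt_principal_iff_nhdsWithin, sdiff_singleton_eq_self self_notMem_Ioi]
    infer_instance
  exact hd.hasDerivWithinAt.nonpos_of_antitoneOn hacc hg

lemma one_div_rpow_le_rpow_neg_mul {C b e x : ℝ} (hC : 0 < C) (hb : 0 < b) (he : 0 < e)
    (hx : 0 ≤ x) (h : e ≤ C * x ^ b) : 1 / C ^ (1 / b) ≤ e ^ (-(1 / b)) * x := by
  have hroot : e ^ (1 / b) / C ^ (1 / b) ≤ x := by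
    calc e ^ (1 / b) / C ^ (1 / b) = (e / C) ^ (1 / b) := (Real.div_rpow he.le hC.le _).symm
      _ ≤ (x ^ b) ^ (1 / b) := by
          gcongr
          exact (div_le_iff₀' hC).2 h
      _ = x := by rw [← Real.rpow_mul hx, mul_one_div_cancel hb.ne', Real.rpow_one]
  have heb : 0 < e ^ (1 / b) := Real.rpow_pos_of_pos he _
  rwa [Real.rpow_neg he.le, ← div_eq_inv_mul, le_div_iff₀ heb, one_div_mul_eq_div]

lemma rpow_sub_rpow_le_of_le_mul_neg_deriv_rpow {E E' : ℝ → ℝ} {τ₀ τ₁ C b : ℝ}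
    (hC : 0 < C) (hb : 1 < b) (hτ : τ₀ ≤ τ₁)
    (hderiv : ∀ τ ∈ Icc τ₀ τ₁, HasDerivAt E (E' τ) τ)
    (hE' : ∀ τ ∈ Icc τ₀ τ₁, E' τ ≤ 0) (hpos : ∀ τ ∈ Icc τ₀ τ₁, 0 < E τ)
    (hineq : ∀ τ ∈ Icc τ₀ τ₁, E τ ≤ C * (-E' τ) ^ b) :
    E τ₁ ^ ((b - 1) / b) - E τ₀ ^ ((b - 1) / b) ≤
      -((b - 1) / b / C ^ (1 / b)) * (τ₁ - τ₀) := by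
  have hθ_sub_one : (b - 1) / b - 1 = -(1 / b) := by field_simp; ring
  set θ := (b - 1) / b
  have hθ : 0 ≤ θ := div_nonneg (by linarith) (by linarith)
  have hderiv_rpow : ∀ τ ∈ Icc τ₀ τ₁,
      HasDerivAt (fun t => E t ^ θ) (E' τ * θ * E τ ^ (θ - 1)) τ := fun τ hτ =>
    (hderiv τ hτ).rpow_const (Or.inl (hpos τ hτ).ne')
  refine (convex_Icc τ₀ τ₁).image_sub_le_mul_sub_of_deriv_le
    (fun τ hτ => (hderiv_rpow τ hτ).continuousAt.continuousWithinAt)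
    (fun τ hτ => (hderiv_rpow τ (interior_subset hτ)).differentiableAt.differentiableWithinAt)
    (fun τ hτ => ?_) τ₀ (left_mem_Icc.2 hτ) τ₁ (right_mem_Icc.2 hτ) hτ
  replace hτ := interior_subset hτ
  have hrate := one_div_rpow_le_rpow_neg_mul hC (by linarith) (hpos τ hτ)
    (neg_nonneg.2 (hE' τ hτ)) (hineq τ hτ)
  rw [(hderiv_rpow τ hτ).deriv, hθ_sub_one]
  calc E' τ * θ * E τ ^ (-(1 / b)) = -(θ * (E τ ^ (-(1 / b)) * -E' τ)) := by ring
    _ ≤ -(θ * (1 / C ^ (1 / b))) := by gcongr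
    _ = -(θ / C ^ (1 / b)) := by ring

lemma sub_lt_of_pos_of_le_mul_neg_deriv_rpow {E E' : ℝ → ℝ} {τ₀ τ₁ C b : ℝ}
    (hC : 0 < C) (hb : 1 < b) (hτ : τ₀ ≤ τ₁)
    (hderiv : ∀ τ ∈ Icc τ₀ τ₁, HasDerivAt E (E' τ) τ)
    (hE' : ∀ τ ∈ Icc τ₀ τ₁, E' τ ≤ 0) (hpos : ∀ τ ∈ Icc τ₀ τ₁, 0 < E τ)
    (hineq : ∀ τ ∈ Icc τ₀ τ₁, E τ ≤ C * (-E' τ) ^ b) :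
    τ₁ - τ₀ < (b / (b - 1)) * C ^ (1 / b) * E τ₀ ^ ((b - 1) / b) := by
  have hdecay := rpow_sub_rpow_le_of_le_mul_neg_deriv_rpow hC hb hτ hderiv hE' hpos hineq
  have hE₁ : 0 < E τ₁ ^ ((b - 1) / b) := Real.rpow_pos_of_pos (hpos τ₁ (right_mem_Icc.2 hτ)) _
  have hCb : 0 < C ^ (1 / b) := Real.rpow_pos_of_pos hC _
  have hK : 0 < (b - 1) / b / C ^ (1 / b) := div_pos (div_pos (by linarith) (by linarith)) hCb
  calc τ₁ - τ₀ < E τ₀ ^ ((b - 1) / b) / ((b - 1) / b / C ^ (1 / b)) :=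
        (lt_div_iff₀' hK).2 (by linarith)
    _ = (b / (b - 1)) * C ^ (1 / b) * E τ₀ ^ ((b - 1) / b) := by
        have : b - 1 ≠ 0 := by linarith
        field_simp

theorem finite_extinction_general
    (τ₀ C b : ℝ) (hC : 0 < C) (hb : 1 < b)
    (E E' : ℝ → ℝ)
    (hEderiv : ∀ τ : ℝ, τ₀ ≤ τ → HasDerivAt E (E' τ) τ)
    (hEnn : ∀ τ : ℝ, τ₀ ≤ τ → 0 ≤ E τ)
    (hEmono : ∀ a b' : ℝ, τ₀ ≤ a → a ≤ b' → E b' ≤ E a)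
    (hineq : ∀ τ : ℝ, τ₀ ≤ τ → 0 < E τ → E τ ≤ C * (-E' τ) ^ b) :
    ∀ τ : ℝ, τ₀ + (b/(b - 1)) * C ^ (1/b) * E τ₀ ^ ((b - 1)/b) ≤ τ → E τ = 0 := by
  intro τ₁ hτ₁
  have hT : 0 ≤ (b / (b - 1)) * C ^ (1 / b) * E τ₀ ^ ((b - 1) / b) :=
    mul_nonneg (mul_nonneg (div_nonneg (by linarith) (by linarith)) (by positivity))
      (Real.rpow_nonneg (hEnn τ₀ le_rfl) _)
  have hτ : τ₀ ≤ τ₁ := by linarith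
  by_contra hne
  have hpos : ∀ τ ∈ Icc τ₀ τ₁, 0 < E τ := fun τ hτ' =>
    ((hEnn τ₁ hτ).lt_of_ne' hne).trans_le (hEmono τ τ₁ hτ'.1 hτ'.2)
  have hanti : AntitoneOn E (Ici τ₀) := fun a ha _ _ hab => hEmono a _ ha hab
  have hlifetime := sub_lt_of_pos_of_le_mul_neg_deriv_rpow hC hb hτ
    (fun τ hτ' => hEderiv τ hτ'.1)
    (fun τ hτ' => (hEderiv τ hτ'.1).nonpos_of_antitoneOn_Ici hanti hτ'.1) hpos
    (fun τ hτ' => hineq τ hτ'.1 (hpos τ hτ'))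
  linarith

/-- Finite extinction for an ordinary differential inequality: if `E ≥ 0` is `C¹`,
nonincreasing on `[τ₀,∞)` and satisfies `E(τ) ≤ C (−E'(τ))^b` with `b > 1` wherever
`E(τ) > 0`, then `E` vanishes identically for
`τ ≥ τ₀ + (b/(b−1)) C^{1/b} E(τ₀)^{(b−1)/b}`. -/
theorem finite_extinction
    (τ₀ C b : ℝ) (hC : 0 < C) (hb : 1 < b)
    (E E' : ℝ → ℝ)
    (hEderiv : ∀ τ : ℝ, τ₀ ≤ τ → HasDerivAt E (E' τ) τ)
    (hE'cont : ContinuousOn E' (Set.Ici τ₀))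
    (hEnn : ∀ τ : ℝ, τ₀ ≤ τ → 0 ≤ E τ)
    (hEmono : ∀ a b' : ℝ, τ₀ ≤ a → a ≤ b' → E b' ≤ E a)
    (hineq : ∀ τ : ℝ, τ₀ ≤ τ → 0 < E τ → E τ ≤ C * (-E' τ) ^ b) :
    ∀ τ : ℝ, τ₀ + (b/(b - 1)) * C ^ (1/b) * E τ₀ ^ ((b - 1)/b) ≤ τ → E τ = 0 :=
  finite_extinction_general τ₀ C b hC hb E E' hEderiv hEnn hEmono hineq
end

section
/- Let N ≥ 1 and q > m > 1. Let ψ : [0,∞) → ℝ be twice continuously differentiable with 0 < ψ(r) ≤ 1 for all r ≥ 0, ψ′(0) = 0, and ψ″(r) + ((N−1)/r)·ψ′(r) = ψ(r)^{q/m} − ψ(r)^{1/m} for every r > 0. Then ψ(r) = 1 for every r ≥ 0. -/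
/-!
Since `(r^{N-1} ψ')' = r^{N-1} (ψ^{q/m} - ψ^{1/m}) ≤ 0` and `r^{N-1} ψ'` vanishes at `0`, `ψ` is
nonincreasing. If `ψ r₀ < 1`, then on `[r₀, ∞)` the function `ψ` is a positive supersolution of
`ψ'' + (N-1)/r ψ' + δ ψ ≤ 0` with `δ = 1 - (ψ r₀)^{(q-1)/m} > 0`. For large `r` the Riccati
variable `w = -ψ'/ψ` then satisfies `w' ≥ (δ + w²)/2`, so `arctan w` grows linearly, which is
impossible.
-/

open Set Real

lemma antitoneOn_Ici_of_hasDerivAt_nonpos {f f' : ℝ → ℝ} {a : ℝ}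
    (hf : ∀ x, a ≤ x → HasDerivAt f (f' x) x) (hf' : ∀ x, a < x → f' x ≤ 0) :
    AntitoneOn f (Ici a) :=
  antitoneOn_of_hasDerivWithinAt_nonpos (convex_Ici a)
    (fun x hx ↦ (hf x hx).continuousAt.continuousWithinAt)
    (fun x hx ↦ by
      rw [interior_Ici] at hx
      exact (hf x (le_of_lt hx)).hasDerivWithinAt)
    (fun x hx ↦ by rw [interior_Ici] at hx; exact hf' x hx)

lemma mul_sub_le_sub_of_hasDerivAt_Ici {f f' : ℝ → ℝ} {a C : ℝ}
    (hf : ∀ x, a ≤ x → HasDerivAt f (f' x) x) (hf' : ∀ x, a < x → C ≤ f' x)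
    {y : ℝ} (hy : a ≤ y) : C * (y - a) ≤ f y - f a := by
  have hg : AntitoneOn (fun x ↦ C * x - f x) (Ici a) :=
    antitoneOn_Ici_of_hasDerivAt_nonpos
      (fun x hx ↦ ((hasDerivAt_id x).const_mul C).sub (hf x hx))
      (fun x hx ↦ by linarith [hf' x hx])
  have := hg self_mem_Ici (mem_Ici.2 hy) hy
  simp only at this
  linarith

lemma not_forall_mul_one_add_sq_le_deriv {w w' : ℝ → ℝ} {a c : ℝ} (hc : 0 < c)
    (hw : ∀ x, a ≤ x → HasDerivAt w (w' x) x)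
    (hriccati : ∀ x, a < x → c * (1 + w x ^ 2) ≤ w' x) : False := by
  have hgrowth := mul_sub_le_sub_of_hasDerivAt_Ici (f := fun x ↦ arctan (w x)) (C := c)
    (fun x hx ↦ (hw x hx).arctan)
    (fun x hx ↦ by
      rw [one_div_mul_eq_div, le_div_iff₀ (by positivity)]
      exact hriccati x hx)
    (y := a + π / c) (by linarith [div_pos pi_pos hc])
  have hπ : c * (a + π / c - a) = π := by field_simp; ring
  rw [hπ] at hgrowth
  linarith [arctan_lt_pi_div_two (w (a + π / c)), neg_pi_div_two_lt_arctan (w a)]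

lemma nonpos_of_deriv_add_div_mul_nonpos (k : ℕ) {u u' : ℝ → ℝ}
    (hu : ∀ r, 0 ≤ r → HasDerivAt u (u' r) r) (hu0 : u 0 = 0)
    (h : ∀ r, 0 < r → u' r + k / r * u r ≤ 0) {r : ℝ} (hr : 0 ≤ r) : u r ≤ 0 := by
  have hflux : AntitoneOn (fun x ↦ x ^ k * u x) (Ici 0) :=
    antitoneOn_Ici_of_hasDerivAt_nonpos (fun x hx ↦ (hasDerivAt_pow k x).mul (hu x hx))
      (fun x hx ↦ by
        have hx' : x ≠ 0 := hx.ne'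
        have hsplit : (k : ℝ) * x ^ (k - 1) * u x + x ^ k * u' x
            = x ^ k * (u' x + k / x * u x) := by
          cases k with
          | zero => simp
          | succ j => field_simp; simp only [Nat.add_sub_cancel, pow_succ]; push_cast; ring
        rw [hsplit]
        exact mul_nonpos_of_nonneg_of_nonpos (pow_nonneg hx.le k) (h x hx))
  rcases hr.eq_or_lt with rfl | hr
  · exact hu0.le
  · have := hflux self_mem_Ici (mem_Ici.2 hr.le) hr.le
    simp only [hu0, mul_zero] at this
    exact nonpos_of_mul_nonpos_right this (pow_pos hr k)

lemma mul_one_sub_rpow_le_rpow_sub_rpow {s c m q : ℝ} (hs : 0 < s) (hsc : s ≤ c) (hc : c ≤ 1)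
    (hm : 1 ≤ m) (hq : 1 ≤ q) :
    s * (1 - c ^ ((q - 1) / m)) ≤ s ^ (1 / m) - s ^ (q / m) := by
  have hm0 : 0 < m := by linarith
  have hsplit : s ^ (q / m) = s ^ (1 / m) * s ^ ((q - 1) / m) := by
    rw [← rpow_add hs]; ring_nf
  have hmono : s ^ ((q - 1) / m) ≤ c ^ ((q - 1) / m) :=
    rpow_le_rpow hs.le hsc (div_nonneg (by linarith) hm0.le)
  have hroot : s ≤ s ^ (1 / m) := by
    conv_lhs => rw [← rpow_one s]
    exact rpow_le_rpow_of_exponent_ge hs (hsc.trans hc) (by rw [div_le_one hm0]; exact hm)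
  have hc' : c ^ ((q - 1) / m) ≤ 1 := rpow_le_one (hs.le.trans hsc) hc (by positivity)
  rw [hsplit]
  nlinarith [rpow_pos_of_pos hs (1 / m)]

lemma riccati_ineq_of_supersolution {k δ p p' p'' : ℝ} (hp : 0 < p) (hk : k ^ 2 ≤ δ)
    (hsuper : p'' + k * p' + δ * p ≤ 0) :
    min δ 1 / 2 * (1 + (-p' / p) ^ 2) ≤ (-p'' * p - -p' * p') / p ^ 2 := by
  set v := p' / p
  have hquot : (-p'' * p - -p' * p') / p ^ 2 = -p'' / p + v ^ 2 := by
    simp only [v]; field_simp; ring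
  have hp'' : δ + k * v ≤ -p'' / p := by
    rw [le_div_iff₀ hp]; simp only [v]; field_simp; linarith
  rw [neg_div, neg_sq, hquot]
  -- `k v ≥ -(k² + v²)/2 ≥ -(δ + v²)/2`
  nlinarith [min_le_left δ 1, min_le_right δ 1, sq_nonneg (k + v), sq_nonneg v]

lemma no_positive_radial_supersolution (k : ℝ) {δ R : ℝ} (hδ : 0 < δ) (hR : 0 < R)
    {ψ ψ' ψ'' : ℝ → ℝ}
    (hd1 : ∀ x, R ≤ x → HasDerivAt ψ (ψ' x) x) (hd2 : ∀ x, R ≤ x → HasDerivAt ψ' (ψ'' x) x)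
    (hpos : ∀ x, R ≤ x → 0 < ψ x)
    (hsuper : ∀ x, R ≤ x → ψ'' x + k / x * ψ' x + δ * ψ x ≤ 0) : False := by
  set R' := max R (|k| / √δ)
  have hR' : ∀ x, R' ≤ x → R ≤ x := fun x hx ↦ (le_max_left _ _).trans hx
  have hcoeff : ∀ x, R' ≤ x → (k / x) ^ 2 ≤ δ := by
    intro x hx
    have hx0 : 0 < x := hR.trans_le (hR' x hx)
    have : |k| ≤ √δ * x := by
      rw [← div_le_iff₀' (sqrt_pos.2 hδ)]; exact (le_max_right _ _).trans hx
    rw [div_pow, div_le_iff₀ (by positivity), ← sq_abs, ← sq_sqrt hδ.le, ← mul_pow]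
    exact pow_le_pow_left₀ (abs_nonneg k) this 2
  exact not_forall_mul_one_add_sq_le_deriv (a := R') (c := min δ 1 / 2) (by positivity)
    (fun x hx ↦ ((hd2 x (hR' x hx)).neg).div (hd1 x (hR' x hx)) (hpos x (hR' x hx)).ne')
    (fun x hx ↦ riccati_ineq_of_supersolution (hpos x (hR' x hx.le)) (hcoeff x hx.le)
      (hsuper x (hR' x hx.le)))

theorem radial_elliptic_uniqueness_general
    (N : ℕ) (hN : 1 ≤ N) (m q : ℝ) (hm : 1 < m) (hq : m < q)
    (ψ ψ' ψ'' : ℝ → ℝ)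
    (hd1 : ∀ r : ℝ, 0 ≤ r → HasDerivAt ψ (ψ' r) r)
    (hd2 : ∀ r : ℝ, 0 ≤ r → HasDerivAt ψ' (ψ'' r) r)
    (hpos : ∀ r : ℝ, 0 ≤ r → 0 < ψ r)
    (hle : ∀ r : ℝ, 0 ≤ r → ψ r ≤ 1)
    (hzero : ψ' 0 = 0)
    (hode : ∀ r : ℝ, 0 < r →
      ψ'' r + (((N : ℝ) - 1)/r) * ψ' r = ψ r ^ (q/m) - ψ r ^ (1/m)) :
    ∀ r : ℝ, 0 ≤ r → ψ r = 1 := by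
  have hcoeff : ((N : ℝ) - 1) = (N - 1 : ℕ) := by rw [Nat.cast_sub hN, Nat.cast_one]
  rw [hcoeff] at hode
  have hψ'_nonpos : ∀ r, 0 ≤ r → ψ' r ≤ 0 := fun r hr ↦
    nonpos_of_deriv_add_div_mul_nonpos (N - 1) hd2 hzero (fun x hx ↦ by
      rw [hode x hx, sub_nonpos, ← sub_nonneg]
      simpa using mul_one_sub_rpow_le_rpow_sub_rpow (hpos x hx.le) (hle x hx.le) le_rfl
        hm.le (hm.trans hq).le) hr
  intro r₀ hr₀
  by_contra hne
  set δ := 1 - ψ r₀ ^ ((q - 1) / m)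
  have hδ : 0 < δ := sub_pos.2 <| rpow_lt_one (hpos r₀ hr₀).le
    ((hle r₀ hr₀).lt_of_ne hne) (div_pos (by linarith) (by linarith))
  have hanti : AntitoneOn ψ (Ici r₀) := antitoneOn_Ici_of_hasDerivAt_nonpos
    (fun x hx ↦ hd1 x (hr₀.trans hx)) (fun x hx ↦ hψ'_nonpos x (hr₀.trans hx.le))
  refine no_positive_radial_supersolution (N - 1 : ℕ) (R := r₀ + 1) hδ (by linarith)
    (fun x hx ↦ hd1 x (by linarith)) (fun x hx ↦ hd2 x (by linarith))
    (fun x hx ↦ hpos x (by linarith)) (fun x hx ↦ ?_)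
  have hψx : ψ x ≤ ψ r₀ := hanti self_mem_Ici (mem_Ici.2 (by linarith)) (by linarith)
  have hgap := mul_one_sub_rpow_le_rpow_sub_rpow (hpos x (by linarith)) hψx (hle r₀ hr₀)
    hm.le (hm.trans hq).le
  rw [hode x (by linarith)]
  linarith

/-- The radial elliptic equation `ψ'' + ((N−1)/r) ψ' = ψ^{q/m} − ψ^{1/m}` on `(0,∞)`, with
`ψ'(0) = 0` and `0 < ψ ≤ 1`, admits only the constant solution `ψ ≡ 1` (for `q > m > 1`). -/
theorem radial_elliptic_uniqueness
    (N : ℕ) (hN : 1 ≤ N) (m q : ℝ) (hm : 1 < m) (hq : m < q)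
    (ψ ψ' ψ'' : ℝ → ℝ)
    (hd1 : ∀ r : ℝ, 0 ≤ r → HasDerivAt ψ (ψ' r) r)
    (hd2 : ∀ r : ℝ, 0 ≤ r → HasDerivAt ψ' (ψ'' r) r)
    (hd2cont : ContinuousOn ψ'' (Set.Ici 0))
    (hpos : ∀ r : ℝ, 0 ≤ r → 0 < ψ r)
    (hle : ∀ r : ℝ, 0 ≤ r → ψ r ≤ 1)
    (hzero : ψ' 0 = 0)
    (hode : ∀ r : ℝ, 0 < r →
      ψ'' r + (((N : ℝ) - 1)/r) * ψ' r = ψ r ^ (q/m) - ψ r ^ (1/m)) :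
    ∀ r : ℝ, 0 ≤ r → ψ r = 1 :=
  radial_elliptic_uniqueness_general N hN m q hm hq ψ ψ' ψ'' hd1 hd2 hpos hle hzero hode
end
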